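/- arXiv:math/0206225 — 2 statements merged into one kernel-verified Lean document; each statement's English description precedes it below -/
import Mathlib

section
/- Let α and β be partitions complementary relative to the rectangle □(n,m). If the partition μ has empty 2-core and 2-quotient (α, β), then μ is (n,m)-balanced. -/
open scoped BigOperators

/-- A partition, represented canonically as the multiset of its (positive) parts. -/
structure Ptn where
  parts : Multiset ℕ
  pos : ∀ x ∈ parts, 0 < x

namespace Ptn

/-- Build a partition from an arbitrary multiset of naturals by discarding zero parts. -/
def of (s : Multiset ℕ) : Ptn :=
  ⟨s.filter (fun x => 0 < x), fun _ hx => (Multiset.mem_filter.mp hx).2⟩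

/-- The empty partition. -/
def empty : Ptn := ⟨0, by simp⟩

/-- The `i`-th largest part (`0`-indexed); `0` if `i` is at least the number of parts. -/
def part (l : Ptn) (i : ℕ) : ℕ :=
  ((l.parts.sort (· ≤ ·)).reverse).getD i 0

/-- The number of (positive) parts. -/
def length (l : Ptn) : ℕ := Multiset.card l.parts

/-- The size `|λ|`, i.e. the number being partitioned. -/
def size (l : Ptn) : ℕ := l.parts.sum

/-- A partition is strict if all its parts are distinct. -/
def Strict (l : Ptn) : Prop := l.parts.Nodup

/-- The conjugate partition. -/
def conj (l : Ptn) : Ptn :=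
  of ((Multiset.range (l.part 0)).map
    (fun j => Multiset.card (l.parts.filter (fun x => j < x))))

end Ptn

/-- The rectangular partition `□(n,m)` with `n` rows of length `m`. -/
def rect (n m : ℕ) : Ptn := Ptn.of (Multiset.replicate n m)

/-- The partition obtained by multiplying every part by `r`. -/
def scaleP (r : ℕ) (l : Ptn) : Ptn := Ptn.of (l.parts.map (fun a => r * a))

/-- Diagram containment: every part of `small` is at most the corresponding part of `big`. -/
def Contains (big small : Ptn) : Prop := ∀ i, small.part i ≤ big.part i

/-- The beta-set (first-column hook lengths) `{λ_i + m - 1 - i : i < m}` of `l`,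
computed with `m` beads (`m` at least the number of parts). -/
def betaSet (l : Ptn) (m : ℕ) : Finset ℕ :=
  (Finset.range m).image (fun i => l.part i + (m - 1 - i))

/-- The partition encoded by a finite set of bead positions: each bead contributes a part
equal to the number of empty positions (holes) below it. -/
def ptnOfBeads (B : Finset ℕ) : Ptn :=
  Ptn.of (B.val.map (fun p => p - (B.filter (fun q => q < p)).card))

/-- Levels of the beads on runner `k` of the `r`-abacus of `l`,
drawn with `r * l.length` beads (a multiple of `r`). -/
def runnerLevels (r : ℕ) (l : Ptn) (k : ℕ) : Finset ℕ :=
  (Finset.range (l.part 0 + r * l.length + 1)).filter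
    (fun s => r * s + k ∈ betaSet l (r * l.length))

/-- The `k`-th component `λ[k]` of the `r`-quotient of `l`. -/
def quotP (r : ℕ) (l : Ptn) (k : ℕ) : Ptn := ptnOfBeads (runnerLevels r l k)

/-- The `r`-core of `l`: push all beads of the `r`-abacus down as far as possible. -/
def coreP (r : ℕ) (l : Ptn) : Ptn :=
  ptnOfBeads ((Finset.range r).biUnion
    (fun k => (Finset.range (runnerLevels r l k).card).image (fun s => r * s + k)))

/-- The key of the bead at position `p` for the `r`-numbering of the beads `B`:
a bead which is the `j`-th lowest bead on runner `k` gets key `r * j + k`. -/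
def rKey (r : ℕ) (B : Finset ℕ) (p : ℕ) : ℕ :=
  r * (B.filter (fun q => q % r = p % r ∧ q < p)).card + p % r

/-- The number of inversions between the natural (increasing-position) numbering of the
beads `B` and the numbering by increasing `key`. -/
def inversions (key : ℕ → ℕ) (B : Finset ℕ) : ℕ :=
  ((B ×ˢ B).filter (fun pq => pq.1 < pq.2 ∧ key pq.2 < key pq.1)).card

/-- Exponent of the `r`-sign `δ_r`. -/
def rSignExp (r : ℕ) (l : Ptn) : ℕ :=
  inversions (rKey r (betaSet l (r * l.length))) (betaSet l (r * l.length))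

/-- The `r`-sign `δ_r(λ) ∈ {±1}`. -/
def rSign (r : ℕ) (l : Ptn) : ℤ := (-1) ^ rSignExp r l

/-- The key of the bead at position `p` for the `3`-bar numbering of the beads `B` of the
`3`-bar abacus: first the beads of runner `0` in increasing order, then the pairs of beads
on runners `2` and `1` paired off by increasing level (runner-`2` bead before
runner-`1` bead), then the remaining unpaired beads in increasing order. -/
def barKey (B : Finset ℕ) (p : ℕ) : ℕ :=
  let n0 := (B.filter (fun q => q % 3 = 0)).card
  let t := min ((B.filter (fun q => q % 3 = 1)).card)
              ((B.filter (fun q => q % 3 = 2)).card)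
  let rk := (B.filter (fun q => q % 3 = p % 3 ∧ q < p)).card
  if p % 3 = 0 then rk
  else if rk < t then (if p % 3 = 2 then n0 + 2 * rk else n0 + 2 * rk + 1)
  else n0 + 2 * t + (rk - t)

/-- Exponent of the `3`-bar sign `δ̄_3`.  The beads of the `3`-bar abacus of a strict
partition sit at the positions given by the parts. -/
def barSignExp (l : Ptn) : ℕ :=
  inversions (barKey l.parts.toFinset) l.parts.toFinset

/-- The `3`-bar sign `δ̄_3(λ) ∈ {±1}` of a strict partition. -/
def barSign3 (l : Ptn) : ℤ := (-1) ^ barSignExp l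

/-- The double `D(λ) = (λ_1,…,λ_l | λ_1 - 1,…,λ_l - 1)` (Frobenius notation)
of a strict partition `λ`, constructed row by row. -/
noncomputable def double (l : Ptn) : Ptn :=
  Ptn.of ((Multiset.range (l.length + l.part 0)).map (fun i =>
    (if i < l.length then l.part i + 1 else 0) +
      ((Finset.range (min i l.length)).filter (fun j => i + 1 ≤ j + l.part j)).card))

/-- The second component `λ^b[1] = D(λ)[1]` of the `3`-bar quotient of a strict
partition `λ`. -/
noncomputable def barQuot1 (l : Ptn) : Ptn := quotP 3 (double l) 1

/-- The staircase-like strict partition `Λ_ℓ = (3ℓ-2, 3ℓ-5, …, 7, 4, 1)`. -/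
def LamP (ℓ : ℕ) : Ptn := Ptn.of ((Multiset.range ℓ).map (fun i => 3 * i + 1))

/-- The staircase partition `Δ_ℓ = (ℓ, ℓ-1, …, 1)`. -/
def DelP (ℓ : ℕ) : Ptn := Ptn.of (Multiset.range (ℓ + 1))

/-- `F_1^m(Λ_ℓ)`: strict partitions obtained from `Λ_ℓ` by adding `m` cells, each
labelled `1`, where the cell in (0-indexed) column `j` is labelled `1` iff `j % 3 = 1`
(each row reads `0,1,0,0,1,0,…`). -/
def F1Lam (ℓ m : ℕ) : Set Ptn :=
  {mu | mu.Strict ∧ Contains mu (LamP ℓ) ∧ mu.size = (LamP ℓ).size + m ∧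
    ∀ i j, (LamP ℓ).part i ≤ j → j < mu.part i → j % 3 = 1}

/-- `F_1^m(Δ_ℓ)`: partitions obtained from `Δ_ℓ` by adding `m` cells, each labelled `1`,
where the cell `(i,j)` is labelled `1` iff `i + j` is odd. -/
def F1Del (ℓ m : ℕ) : Set Ptn :=
  {mu | Contains mu (DelP ℓ) ∧ mu.size = (DelP ℓ).size + m ∧
    ∀ i j, (DelP ℓ).part i ≤ j → j < mu.part i → (i + j) % 2 = 1}

/-- `(α, β)` is complementary relative to the rectangle `□(n,m)`:
`α ⊆ □(n,m)` and `β_i = m - α_{n+1-i}` for `1 ≤ i ≤ n` (0-indexed below). -/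
def Complementary (n m : ℕ) (a b : Ptn) : Prop :=
  a.length ≤ n ∧ a.part 0 ≤ m ∧ b.length ≤ n ∧
    ∀ i < n, b.part i = m - a.part (n - 1 - i)

/-- `W(n,m)`: the set of `(n,m)`-balanced partitions, i.e. partitions of `2nm` with at
most `2n` parts satisfying `μ_i + μ_{2n+1-i} = 2m` for `1 ≤ i ≤ n` (0-indexed below). -/
def W (n m : ℕ) : Set Ptn :=
  {mu | mu.size = 2 * n * m ∧ mu.length ≤ 2 * n ∧
    ∀ i < n, mu.part i + mu.part (2 * n - 1 - i) = 2 * m}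

/-! ### The ring of symmetric functions

We realise the ring of symmetric functions (with rational coefficients) as the
polynomial ring `ℚ[p_1, p_2, …]` in the power sums: the variable `X n` of
`MvPolynomial ℕ ℚ` stands for the power sum `p_{n+1}`. -/

abbrev SymF := MvPolynomial ℕ ℚ

open MvPolynomial

/-- `z_ρ = ∏ a^{m_a} m_a!` for a partition given as a multiset `ρ`. -/
def zval (s : Multiset ℕ) : ℚ :=
  s.toFinset.prod (fun a => (a : ℚ) ^ s.count a * (Nat.factorial (s.count a) : ℚ))

/-- The power sum product `p_ρ` of a multiset `ρ`. -/
noncomputable def pMult (s : Multiset ℕ) : SymF :=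
  (s.map (fun a => (X (a - 1) : SymF))).prod

/-- The complete homogeneous symmetric function `h_n = Σ_{ρ ⊢ n} z_ρ⁻¹ p_ρ`. -/
noncomputable def hSym (n : ℕ) : SymF :=
  ∑ ρ : Nat.Partition n, (zval ρ.parts)⁻¹ • pMult ρ.parts

/-- `h_k` for an integer index, vanishing for negative `k`. -/
noncomputable def hz (k : ℤ) : SymF := if k < 0 then 0 else hSym k.toNat

/-- The Schur function `S_λ`, via the Jacobi–Trudi formula
`S_λ = det(h_{λ_i - i + j})`. -/
noncomputable def schur (l : Ptn) : SymF :=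
  Matrix.det (Matrix.of (fun i j : Fin l.length =>
    hz ((l.part i.val : ℤ) + (j.val : ℤ) - (i.val : ℤ))))

/-- The plethysm `p_r ∘ f`: the algebra endomorphism sending each power sum `p_k`
to `p_{rk}`, i.e. substituting `x_i^r` for each variable `x_i`. -/
noncomputable def pleth (r : ℕ) (f : SymF) : SymF :=
  MvPolynomial.aeval (fun n => (X (r * (n + 1) - 1) : SymF)) f

/-- The `z`-weight of a power-sum monomial (exponent vector `d`). -/
def zfac (d : ℕ →₀ ℕ) : ℚ :=
  d.prod (fun i e => ((i : ℚ) + 1) ^ e * (Nat.factorial e : ℚ))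

/-- The Hall inner product, for which `⟨p_ρ, p_σ⟩ = δ_{ρσ} z_ρ` and the Schur
functions are orthonormal. -/
noncomputable def hall (f g : SymF) : ℚ :=
  f.support.sum (fun d => f.coeff d * g.coeff d * zfac d)

/-- The multi-Littlewood–Richardson coefficient `LR^λ_{μ^0,…,μ^{r-1}}`:
the multiplicity of `S_λ` in `S_{μ^0} ⋯ S_{μ^{r-1}}`. -/
noncomputable def LRmulti (lam : Ptn) (r : ℕ) (q : ℕ → Ptn) : ℚ :=
  hall ((Finset.range r).prod (fun k => schur (q k))) (schur lam)

/-- The Littlewood–Richardson coefficient `LR^λ_{α,β}`: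
the multiplicity of `S_λ` in `S_α · S_β`. -/
noncomputable def LR2 (lam a b : Ptn) : ℚ := hall (schur a * schur b) (schur lam)

/-- The irreducible symmetric group character `χ^μ(ρ)`, via the Frobenius formula
`χ^μ_ρ = ⟨S_μ, p_ρ⟩`. -/
noncomputable def chi (mu rho : Ptn) : ℚ := hall (schur mu) (pMult rho.parts)

/-- Symmetric functions in two alphabets `u`, `v`: `X (inl n)` is `p_{n+1}(u)` and
`X (inr n)` is `p_{n+1}(v)`. -/
abbrev SymF2 := MvPolynomial (ℕ ⊕ ℕ) ℚ

/-- `f ↦ f(u)`. -/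
noncomputable def toU : SymF →ₐ[ℚ] SymF2 :=
  aeval (fun n => (X (Sum.inl n) : SymF2))

/-- `f ↦ f(v)`. -/
noncomputable def toV : SymF →ₐ[ℚ] SymF2 :=
  aeval (fun n => (X (Sum.inr n) : SymF2))

/-- `f ↦ f(u - v)`, the difference of alphabets: `p_k ↦ p_k(u) - p_k(v)`. -/
noncomputable def toUV : SymF →ₐ[ℚ] SymF2 :=
  aeval (fun n => (X (Sum.inl n) : SymF2) - X (Sum.inr n))


/-!
On the `2`-abacus of `μ` drawn with `2ℓ(μ)` beads, an empty `2`-core means that both runners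
carry `ℓ(μ)` beads, so the beta-set of `μ` interleaves those of `α` (even positions) and `β`
(odd positions). In terms of Maya diagrams this no longer refers to the number of beads, so it
also holds with `2n` beads for `μ` and `n` beads for `α` and `β`; in particular `ℓ(μ) ≤ 2n`.
Complementarity in `□(n,m)` says that the `n`-bead beta-set of `β` is the mirror image
`s ↦ m + n - 1 - s` of that of `α`, hence the `2n`-bead beta-set of `μ` is invariant under
`p ↦ 2(m + n) - 1 - p`. This reflection reverses the order of the beads, so it matches the
beads of `μ_i` and `μ_{2n+1-i}`, which is `μ_i + μ_{2n+1-i} = 2m`; summing gives `|μ| = 2nm`.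
-/

open Finset

lemma List.SortedGE.antitone_getD {L : List ℕ} (hL : L.SortedGE) : Antitone (L.getD · 0) := by
  intro i j hij
  by_cases hj : j < L.length
  · simp only [List.getD_eq_getElem _ _ hj, List.getD_eq_getElem _ _ (hij.trans_lt hj)]
    exact hL.getElem_ge_getElem_of_le hij
  · exact (List.getD_eq_default _ _ (not_lt.mp hj)).trans_le (Nat.zero_le _)

lemma List.SortedGE.getD_filter_pos {L : List ℕ} (hL : L.SortedGE) (i : ℕ) :
    (L.filter (0 < ·)).getD i 0 = L.getD i 0 := by
  induction L generalizing i with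
  | nil => rfl
  | cons x L ih =>
    have hx : ∀ y ∈ L, y ≤ x := fun y hy => (List.pairwise_cons.mp hL.pairwise).1 y hy
    have ih' := ih (List.pairwise_cons.mp hL.pairwise).2.sortedGE
    rcases Nat.eq_zero_or_pos x with rfl | hx0
    · have hL0 : L.filter (0 < ·) = [] := List.filter_eq_nil_iff.mpr (by grind)
      have hzero : ∀ y ∈ 0 :: L, y = 0 := by grind
      rw [List.filter_cons_of_neg (by simp), hL0]
      rcases Nat.lt_or_ge i (0 :: L).length with h | h
      · rw [List.getD_eq_getElem _ _ h, hzero _ (List.getElem_mem h)]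
        rfl
      · rw [List.getD_eq_default _ _ h]
        rfl
    · rw [List.filter_cons_of_pos (by simpa using hx0)]
      cases i with
      | zero => rfl
      | succ i => simpa using ih' i

namespace Ptn

lemma part_antitone (l : Ptn) : Antitone l.part :=
  (List.sortedGE_reverse.mpr (l.parts.pairwise_sort _).sortedLE).antitone_getD

lemma part_eq_zero_iff {l : Ptn} {i : ℕ} : l.part i = 0 ↔ l.length ≤ i := by
  have hlen : ((l.parts.sort (· ≤ ·)).reverse).length = l.length := by simp [length]
  constructor
  · intro h
    by_contra! hi
    have hmem : l.part i ∈ l.parts := by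
      rw [part, List.getD_eq_getElem _ _ (by omega), ← Multiset.mem_sort (r := (· ≤ ·)),
        ← List.mem_reverse]
      exact List.getElem_mem _
    exact (l.pos _ hmem).ne' h
  · intro h
    exact List.getD_eq_default _ _ (by omega)

lemma part_of_coe {L : List ℕ} (hL : L.SortedGE) (i : ℕ) : (Ptn.of L).part i = L.getD i 0 := by
  have hF : (L.filter (0 < ·)).SortedGE := (hL.pairwise.filter _).sortedGE
  have hsort : ((Ptn.of L).parts.sort (· ≤ ·)) = (L.filter (0 < ·)).reverse := by
    refine List.Perm.eq_of_sortedLE (Multiset.pairwise_sort _ _).sortedLE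
      (List.sortedLE_reverse.mpr hF) ?_
    rw [← Multiset.coe_eq_coe, Multiset.sort_eq, Multiset.coe_reverse]
    simp [Ptn.of]
  rw [part, hsort, List.reverse_reverse, hL.getD_filter_pos]

lemma size_eq_sum_part {l : Ptn} {M : ℕ} (h : l.length ≤ M) :
    l.size = ∑ i ∈ range M, l.part i := by
  set R := (l.parts.sort (· ≤ ·)).reverse
  have hsize : l.size = ∑ i ∈ range l.length, l.part i := calc
    l.size = R.sum := by
      rw [size, List.sum_reverse, ← Multiset.sum_coe, Multiset.sort_eq]
    _ = ∑ i : Fin R.length, l.part i :=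
      (Fin.sum_univ_getElem R).symm.trans
        (sum_congr rfl fun i _ => (List.getD_eq_getElem _ _ i.2).symm)
    _ = ∑ i ∈ range l.length, l.part i := by
      rw [Fin.sum_univ_eq_sum_range (l.part ·)]
      simp [R, length]
  rw [hsize]
  exact sum_subset (range_subset_range.mpr h)
    fun i _ hi => part_eq_zero_iff.mpr (by simpa using hi)

@[simp]
lemma mem_betaSet {l : Ptn} {M p : ℕ} :
    p ∈ betaSet l M ↔ ∃ i < M, l.part i + (M - 1 - i) = p := by
  simp [betaSet]

lemma part_add_lt_part_add (l : Ptn) {M i j : ℕ} (hij : i < j) (hj : j < M) :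
    l.part j + (M - 1 - j) < l.part i + (M - 1 - i) := by
  have := l.part_antitone hij.le
  omega

lemma card_betaSet (l : Ptn) (M : ℕ) : (betaSet l M).card = M := by
  rw [betaSet, card_image_of_injOn, card_range]
  intro i hi j hj hij
  simp only [coe_range, Set.mem_Iio] at hi hj
  by_contra hne
  rcases Nat.lt_or_gt_of_ne hne with h | h
  · exact (l.part_add_lt_part_add h hj).ne' hij
  · exact (l.part_add_lt_part_add h hi).ne hij

lemma le_of_mem_betaSet {l : Ptn} {M p : ℕ} (hp : p ∈ betaSet l M) :
    p ≤ l.part 0 + (M - 1) := by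
  obtain ⟨i, -, rfl⟩ := mem_betaSet.mp hp
  have := l.part_antitone (Nat.zero_le i)
  omega

lemma betaSet_empty (M : ℕ) : betaSet Ptn.empty M = range M := by
  have hpart : ∀ i, Ptn.empty.part i = 0 := fun i => part_eq_zero_iff.mpr (Nat.zero_le i)
  ext p
  simp only [mem_betaSet, hpart, zero_add, mem_range]
  exact ⟨fun ⟨i, hi, hp⟩ => by omega, fun hp => ⟨M - 1 - p, by omega, by omega⟩⟩

end Ptn

lemma Finset.card_filter_lt_le (S : Finset ℕ) (p : ℕ) : (S.filter (· < p)).card ≤ p :=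
  (card_le_card fun q hq => by simp at hq ⊢; omega : _ ≤ (range p).card).trans_eq (card_range p)

lemma Finset.card_filter_lt_orderEmbOfFin (S : Finset ℕ) (j : Fin S.card) :
    (S.filter (· < S.orderEmbOfFin rfl j)).card = j := by
  set e := S.orderEmbOfFin rfl
  have hS : ∀ q ∈ S, ∃ i, e i = q := fun q hq => by
    rwa [← Set.mem_range, range_orderEmbOfFin]
  have : S.filter (· < e j) = (Iio j).map e.toEmbedding := by
    ext q
    simp only [mem_filter, mem_map, mem_Iio, RelEmbedding.coe_toEmbedding]
    constructor
    · rintro ⟨hq, hlt⟩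
      obtain ⟨i, rfl⟩ := hS q hq
      exact ⟨i, e.lt_iff_lt.mp hlt, rfl⟩
    · rintro ⟨i, hi, rfl⟩
      exact ⟨orderEmbOfFin_mem S rfl i, e.lt_iff_lt.mpr hi⟩
  rw [this, card_map, Fin.card_Iio]

lemma monotone_sub_card_filter_lt (S : Finset ℕ) :
    Monotone fun p => p - (S.filter (· < p)).card := by
  intro p p' hpp'
  have hle := S.card_filter_lt_le p
  have hle' : (S.filter (· < p')).card ≤ (S.filter (· < p)).card + (p' - p) := calc
    _ ≤ (S.filter (· < p) ∪ Ico p p').card :=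
      card_le_card fun q hq => by
        simp only [mem_filter, mem_union, mem_Ico] at hq ⊢
        rcases lt_or_ge q p with h | h
        exacts [Or.inl ⟨hq.1, h⟩, Or.inr ⟨h, hq.2⟩]
    _ ≤ _ := (card_union_le _ _).trans_eq (by rw [Nat.card_Ico])
  dsimp only
  omega

lemma part_ptnOfBeads_rev_add (S : Finset ℕ) (j : Fin S.card) :
    (ptnOfBeads S).part j.rev + j = S.orderEmbOfFin rfl j := by
  set e := S.orderEmbOfFin rfl
  have hcount := S.card_filter_lt_orderEmbOfFin
  have hval : S.val.map (fun p => p - (S.filter (· < p)).card) = List.ofFn fun i => e i - i := by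
    conv_lhs => rw [← map_orderEmbOfFin_univ S rfl, map_val, Multiset.map_map]
    rw [← Fin.univ_val_map]
    congr 1
    ext i
    simp [hcount, e]
  have hsorted : (List.ofFn fun i => e i - i).reverse.SortedGE := by
    refine List.sortedGE_reverse.mpr (List.sortedLE_ofFn_iff.mpr ?_)
    have hfe : (fun i => e i - (i : ℕ)) = (fun p => p - (S.filter (· < p)).card) ∘ e := by
      ext i
      simp [hcount, e]
    rw [hfe]
    exact (monotone_sub_card_filter_lt S).comp e.monotone
  have hptn : ptnOfBeads S = Ptn.of ↑(List.ofFn fun i => e i - i).reverse := by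
    rw [Multiset.coe_reverse, ← hval]
    rfl
  have hj : (j : ℕ) ≤ e j := hcount j ▸ S.card_filter_lt_le _
  rw [hptn, Ptn.part_of_coe hsorted,
    List.getD_eq_getElem _ _ (by simp only [List.length_reverse, List.length_ofFn, j.rev.2]),
    List.getElem_reverse]
  have hrev : (⟨S.card - 1 - (S.card - (j + 1)), by omega⟩ : Fin S.card) = j := by
    ext
    simp only
    omega
  simp only [List.getElem_ofFn, List.length_ofFn, Fin.val_rev, hrev]
  omega

lemma betaSet_ptnOfBeads (S : Finset ℕ) : betaSet (ptnOfBeads S) S.card = S := by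
  have key := part_ptnOfBeads_rev_add S
  ext p
  rw [Ptn.mem_betaSet]
  constructor
  · rintro ⟨i, hi, rfl⟩
    have := key (Fin.rev ⟨i, hi⟩)
    simp only [Fin.rev_rev, Fin.val_rev] at this
    rw [show S.card - 1 - i = S.card - (i + 1) by omega, this]
    exact orderEmbOfFin_mem S rfl _
  · intro hp
    obtain ⟨j, rfl⟩ : p ∈ Set.range (S.orderEmbOfFin rfl) := by rwa [range_orderEmbOfFin]
    refine ⟨j.rev, j.rev.2, ?_⟩
    rw [← key j, Fin.val_rev]
    congr 1
    omega

lemma length_ptnOfBeads_le (S : Finset ℕ) : (ptnOfBeads S).length ≤ S.card :=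
  (Multiset.card_le_card (Multiset.filter_le _ _)).trans_eq (Multiset.card_map _ _)

lemma eq_range_of_ptnOfBeads_eq_empty {S : Finset ℕ} (h : ptnOfBeads S = Ptn.empty) :
    S = range S.card := by
  rw [← Ptn.betaSet_empty, ← h, betaSet_ptnOfBeads]

lemma mem_runnerLevels {r : ℕ} (hr : 0 < r) {l : Ptn} {k s : ℕ} :
    s ∈ runnerLevels r l k ↔ r * s + k ∈ betaSet l (r * l.length) := by
  rw [runnerLevels, mem_filter, mem_range, and_iff_right_iff_imp]
  intro h
  have := Ptn.le_of_mem_betaSet h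
  have := Nat.le_mul_of_pos_left s hr
  omega

lemma sum_card_runnerLevels {r : ℕ} (hr : 0 < r) (l : Ptn) :
    ∑ k ∈ range r, (runnerLevels r l k).card = r * l.length := by
  rw [← l.card_betaSet (r * l.length),
    card_eq_sum_card_fiberwise (f := (· % r)) fun p _ => mem_range.mpr (Nat.mod_lt p hr)]
  refine sum_congr rfl fun k hk => ?_
  have hfiber : (betaSet l (r * l.length)).filter (· % r = k) =
      (runnerLevels r l k).image (r * · + k) := by
    ext p
    simp only [mem_filter, mem_image, mem_runnerLevels hr]
    constructor
    · rintro ⟨hp, rfl⟩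
      exact ⟨p / r, by rwa [Nat.div_add_mod], Nat.div_add_mod p r⟩
    · rintro ⟨s, hs, rfl⟩
      refine ⟨hs, ?_⟩
      simp [Nat.mod_eq_of_lt (mem_range.mp hk)]
  rw [hfiber, card_image_of_injective _ fun s t hst => by
    simpa [Nat.mul_right_inj hr.ne'] using hst]

lemma card_runnerLevels_of_coreP_eq_empty {μ : Ptn} (h : coreP 2 μ = Ptn.empty) {k : ℕ}
    (hk : k < 2) : (runnerLevels 2 μ k).card = μ.length := by
  have hsum := sum_card_runnerLevels two_pos μ
  simp only [sum_range, Fin.sum_univ_two, Fin.val_zero, Fin.val_one] at hsum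
  set m₀ := (runnerLevels 2 μ 0).card
  set m₁ := (runnerLevels 2 μ 1).card
  set T := (range 2).biUnion fun k => (range (runnerLevels 2 μ k).card).image (2 * · + k)
  have hmem : ∀ p, p ∈ T ↔ (p % 2 = 0 ∧ p / 2 < m₀) ∨ (p % 2 = 1 ∧ p / 2 < m₁) := by
    intro p
    simp only [T, mem_biUnion, mem_range, mem_image]
    constructor
    · rintro ⟨k, hk, s, hs, rfl⟩
      interval_cases k <;> omega
    · rintro (⟨hp, hs⟩ | ⟨hp, hs⟩)
      exacts [⟨0, two_pos, p / 2, hs, by omega⟩, ⟨1, one_lt_two, p / 2, hs, by omega⟩]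
  have hT : T = range T.card := eq_range_of_ptnOfBeads_eq_empty h
  have key : ∀ p, p < T.card ↔ (p % 2 = 0 ∧ p / 2 < m₀) ∨ (p % 2 = 1 ∧ p / 2 < m₁) := by
    intro p
    rw [← hmem, ← mem_range, ← hT]
  -- `T` is an initial segment of `ℕ`, which forces `m₁ ≤ m₀ ≤ m₁ + 1`; `m₀ + m₁` is even.
  have := key (2 * m₀)
  have := key (2 * m₁ + 1)
  have := key (2 * m₀ - 2)
  have := key (2 * m₁ - 1)
  interval_cases k <;> omega

lemma betaSet_quotP_of_coreP_eq_empty {μ : Ptn} (h : coreP 2 μ = Ptn.empty) {k : ℕ}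
    (hk : k < 2) : betaSet (quotP 2 μ k) μ.length = runnerLevels 2 μ k := by
  rw [quotP, ← card_runnerLevels_of_coreP_eq_empty h hk, betaSet_ptnOfBeads]

lemma length_quotP_le_of_coreP_eq_empty {μ : Ptn} (h : coreP 2 μ = Ptn.empty) {k : ℕ}
    (hk : k < 2) : (quotP 2 μ k).length ≤ μ.length :=
  card_runnerLevels_of_coreP_eq_empty h hk ▸ length_ptnOfBeads_le _

namespace Ptn

def maya (l : Ptn) : Set ℤ := Set.range fun i : ℕ => (l.part i : ℤ) - i - 1

lemma mem_betaSet_iff_mem_maya {l : Ptn} {M : ℕ} (h : l.length ≤ M) {p : ℕ} :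
    p ∈ betaSet l M ↔ (p : ℤ) - M ∈ l.maya := by
  simp only [mem_betaSet, maya, Set.mem_range]
  constructor
  · rintro ⟨i, hi, rfl⟩
    exact ⟨i, by omega⟩
  · rintro ⟨i, hi⟩
    have hiM : i < M := by
      by_contra! hMi
      have := part_eq_zero_iff.mpr (h.trans hMi)
      omega
    exact ⟨i, hiM, by omega⟩

lemma mem_maya_of_lt {l : Ptn} {z : ℤ} (hz : z < -l.length) : z ∈ l.maya := by
  refine ⟨(-z - 1).toNat, ?_⟩
  dsimp only
  rw [part_eq_zero_iff.mpr (by omega)]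
  omega

lemma neg_length_not_mem_maya (l : Ptn) : -(l.length : ℤ) ∉ l.maya := by
  rintro ⟨i, hi⟩
  dsimp only at hi
  rcases lt_or_ge i l.length with h | h
  · have : l.part i ≠ 0 := part_eq_zero_iff.not.mpr (by omega)
    omega
  · have := part_eq_zero_iff.mpr h
    omega

lemma length_le_of_forall_lt_mem_maya {l : Ptn} {K : ℕ} (h : ∀ z < -(K : ℤ), z ∈ l.maya) :
    l.length ≤ K := by
  by_contra! hK
  exact l.neg_length_not_mem_maya (h _ (by omega))

/-- `μ` has empty `2`-core and `2`-quotient `(a, b)`, in a form that does not depend on the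
number of beads of the abaci. -/
def InterlacesMaya (μ a b : Ptn) : Prop :=
  ∀ w : ℤ, (2 * w ∈ μ.maya ↔ w ∈ a.maya) ∧ (2 * w + 1 ∈ μ.maya ↔ w ∈ b.maya)

lemma interlacesMaya_of_betaSet {μ a b : Ptn} {K : ℕ} (hμ : μ.length ≤ 2 * K)
    (ha : a.length ≤ K) (hb : b.length ≤ K)
    (h₀ : ∀ s, 2 * s ∈ betaSet μ (2 * K) ↔ s ∈ betaSet a K)
    (h₁ : ∀ s, 2 * s + 1 ∈ betaSet μ (2 * K) ↔ s ∈ betaSet b K) :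
    InterlacesMaya μ a b := by
  intro w
  by_cases hw : -(K : ℤ) ≤ w
  · obtain ⟨s, rfl⟩ : ∃ s : ℕ, w = s - K := ⟨(w + K).toNat, by omega⟩
    have e₀ : 2 * ((s : ℤ) - K) = ((2 * s : ℕ) : ℤ) - (2 * K : ℕ) := by push_cast; ring
    have e₁ : 2 * ((s : ℤ) - K) + 1 = ((2 * s + 1 : ℕ) : ℤ) - (2 * K : ℕ) := by push_cast; ring
    rw [e₁, e₀, ← mem_betaSet_iff_mem_maya hμ, ← mem_betaSet_iff_mem_maya hμ,
      ← mem_betaSet_iff_mem_maya ha, ← mem_betaSet_iff_mem_maya hb]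
    exact ⟨h₀ s, h₁ s⟩
  · exact ⟨iff_of_true (mem_maya_of_lt (by omega)) (mem_maya_of_lt (by omega)),
      iff_of_true (mem_maya_of_lt (by omega)) (mem_maya_of_lt (by omega))⟩

lemma interlacesMaya_of_coreP_eq_empty {μ : Ptn} (h : coreP 2 μ = Ptn.empty) :
    μ.InterlacesMaya (quotP 2 μ 0) (quotP 2 μ 1) :=
  interlacesMaya_of_betaSet (K := μ.length) (by omega)
    (length_quotP_le_of_coreP_eq_empty h two_pos)
    (length_quotP_le_of_coreP_eq_empty h one_lt_two)
    (fun s => by rw [betaSet_quotP_of_coreP_eq_empty h two_pos, mem_runnerLevels two_pos, add_zero])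
    (fun s => by rw [betaSet_quotP_of_coreP_eq_empty h one_lt_two, mem_runnerLevels two_pos])

namespace InterlacesMaya

variable {μ a b : Ptn} {K : ℕ}

lemma length_le (h : InterlacesMaya μ a b) (ha : a.length ≤ K) (hb : b.length ≤ K) :
    μ.length ≤ 2 * K := by
  refine length_le_of_forall_lt_mem_maya fun z hz => ?_
  obtain ⟨w, rfl | rfl⟩ := Int.even_or_odd' z
  · exact (h w).1.mpr (mem_maya_of_lt (by omega))
  · exact (h w).2.mpr (mem_maya_of_lt (by omega))

lemma two_mul_mem_betaSet_iff (h : InterlacesMaya μ a b) (ha : a.length ≤ K)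
    (hb : b.length ≤ K) (s : ℕ) : 2 * s ∈ betaSet μ (2 * K) ↔ s ∈ betaSet a K := by
  rw [mem_betaSet_iff_mem_maya (h.length_le ha hb), mem_betaSet_iff_mem_maya ha,
    ← (h (s - K)).1]
  push_cast
  ring_nf

lemma two_mul_add_one_mem_betaSet_iff (h : InterlacesMaya μ a b) (ha : a.length ≤ K)
    (hb : b.length ≤ K) (s : ℕ) : 2 * s + 1 ∈ betaSet μ (2 * K) ↔ s ∈ betaSet b K := by
  rw [mem_betaSet_iff_mem_maya (h.length_le ha hb), mem_betaSet_iff_mem_maya hb,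
    ← (h (s - K)).2]
  push_cast
  ring_nf

end InterlacesMaya

end Ptn

lemma StrictMono.add_apply_rev_eq {M N : ℕ} {f : Fin M → ℕ} (hf : StrictMono f)
    (hsymm : ∀ i, ∃ j, f i + f j = N) (i : Fin M) : f i + f i.rev = N := by
  have hle : ∀ j, f j ≤ N := fun j => by
    obtain ⟨k, hk⟩ := hsymm j
    omega
  -- `g` is a second increasing enumeration of the range of `f`.
  set g : Fin M → ℕ := fun j => N - f j.rev
  have hg : StrictMono g := fun j k hjk => by
    have := hf (Fin.rev_lt_rev.mpr hjk)
    have := hle j.rev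
    simp only [g]
    omega
  have hrange : Set.range g = Set.range f := by
    ext p
    constructor
    · rintro ⟨j, rfl⟩
      obtain ⟨k, hk⟩ := hsymm j.rev
      exact ⟨k, by simp only [g]; omega⟩
    · rintro ⟨j, rfl⟩
      obtain ⟨k, hk⟩ := hsymm j
      exact ⟨k.rev, by simp only [g, Fin.rev_rev]; omega⟩
  have := congrFun ((hg.range_inj hf).mp hrange) i.rev
  simp only [g, Fin.rev_rev] at this
  have := hle i
  omega

namespace Ptn

lemma part_add_part_of_reflect_mem_betaSet {l : Ptn} {M N : ℕ}
    (hsymm : ∀ p ∈ betaSet l M, p ≤ N ∧ N - p ∈ betaSet l M) {i : ℕ} (hi : i < M) :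
    l.part i + l.part (M - 1 - i) + (M - 1) = N := by
  set f : Fin M → ℕ := fun j => l.part (M - 1 - j) + j
  have hf : StrictMono f := fun j k hjk => by
    have := l.part_antitone (show M - 1 - k ≤ M - 1 - j by omega)
    simp only [f]
    omega
  have hmem : ∀ p, p ∈ betaSet l M ↔ ∃ j, f j = p := fun p => by
    rw [mem_betaSet]
    constructor
    · rintro ⟨i, hi, rfl⟩
      exact ⟨⟨M - 1 - i, by omega⟩, by simp only [f]; rw [Nat.sub_sub_self (by omega)]⟩
    · rintro ⟨j, rfl⟩
      exact ⟨M - 1 - j, by omega, by simp only [f]; rw [Nat.sub_sub_self (by omega)]⟩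
  have hsymm' : ∀ j, ∃ k, f j + f k = N := fun j => by
    obtain ⟨hle, hmem'⟩ := hsymm _ ((hmem _).mpr ⟨j, rfl⟩)
    obtain ⟨k, hk⟩ := (hmem _).mp hmem'
    exact ⟨k, by omega⟩
  have := hf.add_apply_rev_eq hsymm' ⟨M - 1 - i, by omega⟩
  simp only [f, Fin.val_rev] at this
  rw [Nat.sub_sub_self (by omega), show M - (M - 1 - i + 1) = i by omega] at this
  omega

lemma two_mul_size_of_part_add_part {l : Ptn} {M c : ℕ} (hl : l.length ≤ M)
    (h : ∀ i < M, l.part i + l.part (M - 1 - i) = c) : 2 * l.size = M * c := by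
  rw [size_eq_sum_part hl, two_mul]
  nth_rewrite 2 [← sum_range_reflect]
  rw [← sum_add_distrib, sum_congr rfl fun i hi => h i (mem_range.mp hi), sum_const, card_range,
    smul_eq_mul]

end Ptn

namespace Complementary

variable {n m : ℕ} {a b : Ptn}

lemma part_le (hc : Complementary n m a b) (i : ℕ) : a.part i ≤ m :=
  (a.part_antitone (Nat.zero_le i)).trans hc.2.1

lemma symm (hc : Complementary n m a b) : Complementary n m b a := by
  have hpart := hc.part_le
  obtain ⟨ha, -, hb, hba⟩ := hc
  refine ⟨hb, ?_, ha, fun i hi => ?_⟩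
  · rcases Nat.eq_zero_or_pos n with rfl | hn
    · exact (Ptn.part_eq_zero_iff.mpr hb).trans_le (Nat.zero_le m)
    · rw [hba 0 hn]
      exact Nat.sub_le m _
  · have := hba (n - 1 - i) (by omega)
    rw [Nat.sub_sub_self (by omega)] at this
    have := hpart i
    omega

lemma reflect_mem_betaSet (hc : Complementary n m a b) {s : ℕ} (hs : s ∈ betaSet a n) :
    s < m + n ∧ m + n - 1 - s ∈ betaSet b n := by
  obtain ⟨j, hj, rfl⟩ := Ptn.mem_betaSet.mp hs
  have haj := hc.part_le j
  refine ⟨by omega, Ptn.mem_betaSet.mpr ⟨n - 1 - j, by omega, ?_⟩⟩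
  rw [hc.2.2.2 _ (by omega), Nat.sub_sub_self (by omega)]
  omega

end Complementary

lemma Ptn.InterlacesMaya.reflect_mem_betaSet {n m : ℕ} {μ a b : Ptn}
    (h : μ.InterlacesMaya a b) (hc : Complementary n m a b) {p : ℕ}
    (hp : p ∈ betaSet μ (2 * n)) :
    p ≤ 2 * (m + n) - 1 ∧ 2 * (m + n) - 1 - p ∈ betaSet μ (2 * n) := by
  have ha := hc.1
  have hb := hc.2.2.1
  obtain ⟨s, rfl | rfl⟩ := Nat.even_or_odd' p
  · obtain ⟨hs, hs'⟩ := hc.reflect_mem_betaSet ((h.two_mul_mem_betaSet_iff ha hb s).mp hp)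
    rw [show 2 * (m + n) - 1 - 2 * s = 2 * (m + n - 1 - s) + 1 by omega,
      h.two_mul_add_one_mem_betaSet_iff ha hb]
    exact ⟨by omega, hs'⟩
  · obtain ⟨hs, hs'⟩ :=
      hc.symm.reflect_mem_betaSet ((h.two_mul_add_one_mem_betaSet_iff ha hb s).mp hp)
    rw [show 2 * (m + n) - 1 - (2 * s + 1) = 2 * (m + n - 1 - s) by omega,
      h.two_mul_mem_betaSet_iff ha hb]
    exact ⟨by omega, hs'⟩

/-- Lemma 6.3: if `(α,β)` is complementary relative to `□(n,m)` and `μ` has empty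
`2`-core and `2`-quotient `(α,β)`, then `μ` is `(n,m)`-balanced. -/
theorem stmt6 (n m : ℕ) (a b μ : Ptn) (hc : Complementary n m a b)
    (h0 : coreP 2 μ = Ptn.empty) (h1 : quotP 2 μ 0 = a) (h2 : quotP 2 μ 1 = b) :
    μ ∈ W n m := by
  have hμ : μ.InterlacesMaya a b := h1 ▸ h2 ▸ Ptn.interlacesMaya_of_coreP_eq_empty h0
  have hlen : μ.length ≤ 2 * n := hμ.length_le hc.1 hc.2.2.1
  have hpair : ∀ i < 2 * n, μ.part i + μ.part (2 * n - 1 - i) = 2 * m := fun i hi => by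
    have := Ptn.part_add_part_of_reflect_mem_betaSet (fun p hp => hμ.reflect_mem_betaSet hc hp) hi
    omega
  have hsize := Ptn.two_mul_size_of_part_add_part hlen hpair
  exact ⟨by linarith, hlen, fun i hi => hpair i (by omega)⟩
end

section
/- Let ℓ ≥ 1 and 0 ≤ m ≤ ℓ. For every strict partition μ ∈ F_1^m(Λ_ℓ), the quantity p(μ) = Σ_{μ_i ≢ 0 (mod 3)} ⌊(μ_i − 1)/3⌋ (the sum over all parts of μ not divisible by 3) equals C(ℓ, 2); in particular it is independent of m and of the choice of μ. -/
/-!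
Row `i` of `Λ_ℓ` has length `3(ℓ-1-i)+1`, so the first cell that could be added to it sits in
column `3(ℓ-1-i)+1`, which is labelled `1`, while the next column is labelled `0`; and a new
row cannot be started because column `0` is labelled `0`. Hence `μ` has exactly the parts
`3k+1` or `3k+2` for `k < ℓ`, none divisible by `3`, each contributing `k` to `p(μ)`,
and `0 + 1 + ⋯ + (ℓ-1) = C(ℓ,2)`.
-/

open scoped BigOperators

open MvPolynomial

namespace Ptn

lemma parts_eq_map_part (l : Ptn) : l.parts = (Multiset.range l.length).map l.part := by
  set L := (l.parts.sort (· ≤ ·)).reverse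
  have hL : L = (List.range l.length).map l.part := by
    refine List.ext_getElem (by simp [L, length]) fun i hi _ => ?_
    rw [List.getElem_map, List.getElem_range]
    exact (List.getD_eq_getElem _ _ hi).symm
  calc l.parts = (L : Multiset ℕ) := by simp [L, Multiset.sort_eq]
    _ = _ := by rw [hL]; rfl

lemma part_pos_of_lt_length {l : Ptn} {i : ℕ} (h : i < l.length) : 0 < l.part i := by
  apply l.pos
  rw [l.parts_eq_map_part]
  exact Multiset.mem_map_of_mem _ (Multiset.mem_range.mpr h)

lemma part_eq_zero_of_length_le {l : Ptn} {i : ℕ} (h : l.length ≤ i) : l.part i = 0 :=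
  List.getD_eq_default _ _ (by simpa [length] using h)

end Ptn

lemma LamP_sort_parts (ℓ : ℕ) :
    (LamP ℓ).parts.sort (· ≤ ·) = (List.range ℓ).map (fun i => 3 * i + 1) := by
  have hparts : (LamP ℓ).parts = (List.range ℓ).map (fun i => 3 * i + 1) := by
    simp only [LamP, Ptn.of]
    rw [Multiset.filter_eq_self.mpr (by simp)]
    simp [Multiset.range]
  refine List.Perm.eq_of_pairwise' (Multiset.pairwise_sort _ _) ?_ ?_
  · exact List.pairwise_lt_range.map _ fun a b h => by omega
  · rw [← Multiset.coe_eq_coe, Multiset.sort_eq, hparts]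

lemma LamP_part_of_lt {ℓ i : ℕ} (h : i < ℓ) : (LamP ℓ).part i = 3 * (ℓ - 1 - i) + 1 := by
  rw [Ptn.part, LamP_sort_parts, List.getD_eq_getElem _ _ (by simpa using h)]
  simp [List.getElem_reverse]

lemma LamP_part_of_le {ℓ i : ℕ} (h : ℓ ≤ i) : (LamP ℓ).part i = 0 :=
  List.getD_eq_default _ _ (by simpa [LamP_sort_parts] using h)

section F1Lam

variable {ℓ m : ℕ} {μ : Ptn}

lemma F1Lam_part_of_lt (hμ : μ ∈ F1Lam ℓ m) {i : ℕ} (hi : i < ℓ) :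
    μ.part i = 3 * (ℓ - 1 - i) + 1 ∨ μ.part i = 3 * (ℓ - 1 - i) + 2 := by
  obtain ⟨-, hcont, -, hlabel⟩ := hμ
  have hle := hcont i
  rw [LamP_part_of_lt hi] at hle
  by_contra! hlong
  have := hlabel i (3 * (ℓ - 1 - i) + 2) (by rw [LamP_part_of_lt hi]; omega) (by omega)
  omega

lemma F1Lam_part_of_le (hμ : μ ∈ F1Lam ℓ m) {i : ℕ} (hi : ℓ ≤ i) : μ.part i = 0 := by
  by_contra hne
  have := hμ.2.2.2 i 0 (by rw [LamP_part_of_le hi]) (Nat.pos_of_ne_zero hne)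
  omega

lemma F1Lam_length (hμ : μ ∈ F1Lam ℓ m) : μ.length = ℓ := by
  refine le_antisymm (not_lt.mp fun h => ?_) (not_lt.mp fun h => ?_)
  · exact (Ptn.part_pos_of_lt_length h).ne' (F1Lam_part_of_le hμ le_rfl)
  · have := F1Lam_part_of_lt hμ h
    rw [Ptn.part_eq_zero_of_length_le le_rfl] at this
    omega

end F1Lam

theorem stmt13_general (ℓ m : ℕ) (μ : Ptn) (hμ : μ ∈ F1Lam ℓ m) :
    ((μ.parts.filter (fun a => ¬ a % 3 = 0)).map (fun a => (a - 1) / 3)).sum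
      = Nat.choose ℓ 2 := by
  have hparts : μ.parts = (Multiset.range ℓ).map μ.part := by
    rw [μ.parts_eq_map_part, F1Lam_length hμ]
  have hrow : ∀ i ∈ Multiset.range ℓ, ¬ μ.part i % 3 = 0 ∧ (μ.part i - 1) / 3 = ℓ - 1 - i := by
    intro i hi
    rcases F1Lam_part_of_lt hμ (Multiset.mem_range.mp hi) with h | h <;> omega
  rw [Multiset.filter_eq_self.mpr (by simpa [hparts] using fun i hi => (hrow i hi).1), hparts,
    Multiset.map_map, Function.comp_def, Multiset.map_congr rfl fun i hi => (hrow i hi).2]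
  calc ((Multiset.range ℓ).map fun i => ℓ - 1 - i).sum = ∑ i ∈ Finset.range ℓ, (ℓ - 1 - i) := rfl
    _ = ∑ i ∈ Finset.range ℓ, i := Finset.sum_range_reflect id ℓ
    _ = Nat.choose ℓ 2 := by rw [Finset.sum_range_id, Nat.choose_two_right]

/-- For every `μ ∈ F_1^m(Λ_ℓ)`, `p(μ) = Σ_{μ_i ≢ 0 (mod 3)} ⌊(μ_i - 1)/3⌋ = C(ℓ,2)`. -/
theorem stmt13 (ℓ m : ℕ) (hℓ : 1 ≤ ℓ) (hm : m ≤ ℓ) (μ : Ptn) (hμ : μ ∈ F1Lam ℓ m) :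
    ((μ.parts.filter (fun a => ¬ a % 3 = 0)).map (fun a => (a - 1) / 3)).sum
      = Nat.choose ℓ 2 :=
  stmt13_general ℓ m μ hμ
end
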